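/- Let k ≥ 1 and let g : Fin k → ℝ be a finite sequence of real numbers whose total sum is strictly positive, ∑_{ℓ=0}^{k-1} g(ℓ) > 0. Then there exists a cyclic shift of the sequence all of whose partial sums are strictly positive; that is, there exists j ∈ Fin k such that for every i with 1 ≤ i ≤ k one has ∑_{ℓ=0}^{i-1} g((j+ℓ) mod k) > 0. -/
import Mathlib


/-- **Cyclic-shift (cycle) lemma.** If the total sum of a finite sequence of
real gains `g : Fin k → ℝ` (with `k ≥ 1`) is strictly positive, then there is
a cyclic shift of the sequence all of whose partial sums are strictly
positive. -/
theorem cyclic_shift_positive_partial_sums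
    (k : ℕ) (hk : 1 ≤ k) (g : Fin k → ℝ)
    (hsum : 0 < ∑ ℓ, g ℓ) :
    ∃ j : Fin k, ∀ i : ℕ, 1 ≤ i → i ≤ k →
      0 < ∑ ℓ ∈ Finset.range i, g ⟨((j : ℕ) + ℓ) % k, Nat.mod_lt _ (by omega)⟩ := by
  have hk0 : 0 < k := hk
  set f : ℕ → ℝ := fun n => ∑ ℓ ∈ Finset.range n, g ⟨ℓ % k, Nat.mod_lt _ hk0⟩ with hf
  have hstep : ∀ n, f (n + 1) = f n + g ⟨n % k, Nat.mod_lt _ hk0⟩ := by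
    intro n; simp [hf, Finset.sum_range_succ]
  have hper : ∀ n, f (n + k) = f n + ∑ ℓ, g ℓ := by
    intro n
    induction n with
    | zero =>
      simp only [hf, Finset.sum_range_zero, zero_add]
      rw [← Fin.sum_univ_eq_sum_range (fun ℓ => g ⟨ℓ % k, Nat.mod_lt _ hk0⟩) k]
      exact Finset.sum_congr rfl (fun i _ => by
        congr 1; exact Fin.ext (Nat.mod_eq_of_lt i.isLt))
    | succ n ih =>
      have : n + 1 + k = (n + k) + 1 := by ring
      rw [this, hstep, hstep, ih]
      have e : (⟨(n + k) % k, Nat.mod_lt _ hk0⟩ : Fin k) = ⟨n % k, Nat.mod_lt _ hk0⟩ :=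
        Fin.ext (Nat.add_mod_right n k)
      rw [e]; ring
  -- the set of minimizers of f on range k
  have hne : ∃ m ∈ Finset.range k, ∀ n ∈ Finset.range k, f m ≤ f n := by
    obtain ⟨m, hm, hmin⟩ := Finset.exists_min_image (Finset.range k) f
      ⟨0, Finset.mem_range.mpr hk0⟩
    exact ⟨m, hm, hmin⟩
  set s : Finset ℕ := (Finset.range k).filter (fun n => ∀ m ∈ Finset.range k, f n ≤ f m)
    with hs
  have hsne : s.Nonempty := by
    obtain ⟨m, hm, hmin⟩ := hne
    exact ⟨m, Finset.mem_filter.mpr ⟨hm, hmin⟩⟩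
  set j : ℕ := s.max' hsne with hj
  have hjs : j ∈ s := s.max'_mem hsne
  have hjk : j < k := Finset.mem_range.mp (Finset.mem_filter.mp hjs).1
  have hjmin : ∀ n ∈ Finset.range k, f j ≤ f n := (Finset.mem_filter.mp hjs).2
  -- shifted partial sums
  have hshift : ∀ i, f (j + i) = f j + ∑ ℓ ∈ Finset.range i,
      g ⟨(j + ℓ) % k, Nat.mod_lt _ hk0⟩ := by
    intro i
    induction i with
    | zero => simp
    | succ i ih =>
      rw [← Nat.add_assoc, hstep, ih, Finset.sum_range_succ]; ring
  refine ⟨⟨j, hjk⟩, fun i hi1 hik => ?_⟩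
  have hkey : f j < f (j + i) := by
    by_cases hlt : j + i < k
    · have hmem : j + i ∈ Finset.range k := Finset.mem_range.mpr hlt
      rcases lt_or_eq_of_le (hjmin _ hmem) with h | h
      · exact h
      · exfalso
        have : j + i ∈ s := Finset.mem_filter.mpr ⟨hmem, fun m hm => h ▸ hjmin m hm⟩
        have := s.le_max' _ this
        omega
    · have hn : j + i - k < k := by omega
      have heq : j + i = (j + i - k) + k := by omega
      calc f j ≤ f (j + i - k) := hjmin _ (Finset.mem_range.mpr hn)
        _ < f (j + i - k) + ∑ ℓ, g ℓ := by linarith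
        _ = f ((j + i - k) + k) := (hper _).symm
        _ = f (j + i) := by rw [← heq]
  have := hshift i
  have hpos : 0 < ∑ ℓ ∈ Finset.range i, g ⟨(j + ℓ) % k, Nat.mod_lt _ hk0⟩ := by linarith
  convert hpos using 1
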